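/- arXiv:1608.07560 — 2 statements merged into one kernel-verified Lean document; each statement's English description precedes it below -/
import Mathlib

section
/- Let f be a holomorphic function on an open set containing the segment between distinct complex numbers a and b. Then there exists a point α on the segment joining a and b such that |b-a|² · Re(f'(α)) = Re( conj(b-a) · (f(b) - f(a)) ). -/
/-! The real-valued function `z ↦ Re (conj (b - a) · f z)` has, at `z`, real derivative
`w ↦ Re (conj (b - a) · f'(z) · w)`; in the direction `b - a` this is `‖b - a‖² · Re f'(z)`.
Lagrange's mean value theorem for it on the segment `[a, b]` gives the claim. -/

open ComplexConjugate

theorem exists_mem_segment_map_deriv_apply_eq_map_sub {E F : Type*}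
    [NormedAddCommGroup E] [NormedSpace ℝ E] [NormedAddCommGroup F] [NormedSpace ℝ F]
    (ℓ : F →L[ℝ] ℝ) {f : E → F} {f' : E → E →L[ℝ] F} {a b : E}
    (hf : ∀ z ∈ segment ℝ a b, HasFDerivAt f (f' z) z) :
    ∃ α ∈ segment ℝ a b, ℓ (f' α (b - a)) = ℓ (f b - f a) := by
  obtain ⟨α, hα, h⟩ := domain_mvt (f := ℓ ∘ f) (f' := fun z => ℓ.comp (f' z))
    (fun z hz => (ℓ.hasFDerivAt.comp z (hf z hz)).hasFDerivWithinAt) (convex_segment a b)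
    (left_mem_segment ℝ a b) (right_mem_segment ℝ a b)
  exact ⟨α, hα, by simpa [map_sub] using h.symm⟩

theorem Complex.re_conj_mul_mul_self (w z : ℂ) : (conj w * (w * z)).re = ‖w‖ ^ 2 * z.re := by
  rw [← mul_assoc, Complex.conj_mul', ← Complex.ofReal_pow, Complex.re_ofReal_mul]

theorem complex_mvt_re_general (f : ℂ → ℂ) (a b : ℂ)
    (s : Set ℂ) (hs : IsOpen s) (hseg : segment ℝ a b ⊆ s)
    (hf : DifferentiableOn ℂ f s) :
    ∃ α ∈ segment ℝ a b,
      (‖b - a‖)^2 * (deriv f α).re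
        = ((starRingEnd ℂ) (b - a) * (f b - f a)).re := by
  have hderiv : ∀ z ∈ segment ℝ a b, HasFDerivAt f
      ((ContinuousLinearMap.smulRight (1 : ℂ →L[ℂ] ℂ) (deriv f z)).restrictScalars ℝ) z :=
    fun z hz =>
      ((hf.differentiableAt (hs.mem_nhds (hseg hz))).hasDerivAt.hasFDerivAt).restrictScalars ℝ
  obtain ⟨α, hα, h⟩ := exists_mem_segment_map_deriv_apply_eq_map_sub
    (Complex.reCLM.comp (ContinuousLinearMap.mul ℝ ℂ (conj (b - a)))) hderiv
  refine ⟨α, hα, ?_⟩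
  rw [← Complex.re_conj_mul_mul_self]
  simpa only [ContinuousLinearMap.comp_apply, ContinuousLinearMap.mul_apply',
    ContinuousLinearMap.coe_restrictScalars', ContinuousLinearMap.smulRight_apply,
    one_apply_eq_self, smul_eq_mul, Complex.reCLM_apply] using h

/-- Real-part complex Mean Value Theorem: if `f` is holomorphic on an open set
containing the segment between distinct `a b : ℂ`, then there is `α` on the
segment with `|b-a|² · Re(f'(α)) = Re( conj(b-a) · (f b - f a) )`. -/
theorem complex_mvt_re (f : ℂ → ℂ) (a b : ℂ) (hab : a ≠ b)
    (s : Set ℂ) (hs : IsOpen s) (hseg : segment ℝ a b ⊆ s)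
    (hf : DifferentiableOn ℂ f s) :
    ∃ α ∈ segment ℝ a b,
      (‖b - a‖)^2 * (deriv f α).re
        = ((starRingEnd ℂ) (b - a) * (f b - f a)).re :=
  complex_mvt_re_general f a b s hs hseg hf
end

section
/- Let f be a holomorphic function on an open set containing the segment between distinct complex numbers a and b. Then there exists a point β on the segment joining a and b such that |b-a|² · Im(f'(β)) = Im( conj(b-a) · (f(b) - f(a)) ). -/
open ComplexConjugate

theorem exists_mem_segment_map_sub_eq_map_fderiv {E F : Type*} [NormedAddCommGroup E]
    [NormedSpace ℝ E] [NormedAddCommGroup F] [NormedSpace ℝ F] (L : F →L[ℝ] ℝ) {f : E → F}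
    {a b : E} (hf : ∀ z ∈ segment ℝ a b, DifferentiableAt ℝ f z) :
    ∃ z ∈ segment ℝ a b, L (f b - f a) = L (fderiv ℝ f z (b - a)) := by
  have hLf : ∀ z ∈ segment ℝ a b,
      HasFDerivWithinAt (L ∘ f) (L.comp (fderiv ℝ f z)) (segment ℝ a b) z := fun z hz =>
    (L.hasFDerivAt.comp z (hf z hz).hasFDerivAt).hasFDerivWithinAt
  obtain ⟨z, hz, h⟩ := domain_mvt hLf (convex_segment a b) (left_mem_segment ℝ a b)
    (right_mem_segment ℝ a b)
  exact ⟨z, hz, by rw [map_sub]; exact h⟩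

theorem exists_mem_segment_map_sub_eq_map_smul_deriv {F : Type*} [NormedAddCommGroup F]
    [NormedSpace ℂ F] (L : F →L[ℝ] ℝ) {f : ℂ → F} {a b : ℂ}
    (hf : ∀ z ∈ segment ℝ a b, DifferentiableAt ℂ f z) :
    ∃ z ∈ segment ℝ a b, L (f b - f a) = L ((b - a) • deriv f z) := by
  obtain ⟨z, hz, h⟩ := exists_mem_segment_map_sub_eq_map_fderiv L
    (fun z hz => (hf z hz).restrictScalars ℝ)
  refine ⟨z, hz, ?_⟩
  rw [h, (hf z hz).fderiv_restrictScalars ℝ, ContinuousLinearMap.coe_restrictScalars',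
    fderiv_eq_smul_deriv]

theorem Complex.im_conj_mul_mul_self (c w : ℂ) : (conj c * (c * w)).im = ‖c‖ ^ 2 * w.im := by
  rw [← mul_assoc, Complex.conj_mul', ← Complex.ofReal_pow, Complex.im_ofReal_mul]

theorem complex_mvt_im_general (f : ℂ → ℂ) (a b : ℂ)
    (s : Set ℂ) (hs : IsOpen s) (hseg : segment ℝ a b ⊆ s)
    (hf : DifferentiableOn ℂ f s) :
    ∃ β ∈ segment ℝ a b,
      (‖b - a‖)^2 * (deriv f β).im
        = ((starRingEnd ℂ) (b - a) * (f b - f a)).im := by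
  let L : ℂ →L[ℝ] ℝ := Complex.imCLM.comp (ContinuousLinearMap.mul ℝ ℂ (conj (b - a)))
  obtain ⟨β, hβ, h⟩ := exists_mem_segment_map_sub_eq_map_smul_deriv L
    (fun z hz => hf.differentiableAt (hs.mem_nhds (hseg hz)))
  have hL : ∀ w, L w = (conj (b - a) * w).im := fun _ => rfl
  rw [hL, hL, smul_eq_mul, Complex.im_conj_mul_mul_self] at h
  exact ⟨β, hβ, h.symm⟩

/-- Imaginary-part complex Mean Value Theorem: if `f` is holomorphic on an open set
containing the segment between distinct `a b : ℂ`, then there is `β` on the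
segment with `|b-a|² · Im(f'(α)) = Im( conj(b-a) · (f b - f a) )`. -/
theorem complex_mvt_im (f : ℂ → ℂ) (a b : ℂ) (hab : a ≠ b)
    (s : Set ℂ) (hs : IsOpen s) (hseg : segment ℝ a b ⊆ s)
    (hf : DifferentiableOn ℂ f s) :
    ∃ β ∈ segment ℝ a b,
      (‖b - a‖)^2 * (deriv f β).im
        = ((starRingEnd ℂ) (b - a) * (f b - f a)).im :=
  complex_mvt_im_general f a b s hs hseg hf
end
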